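/- Let S be an su(2) block for ψ. Then K_ψ decomposes as the internal direct sum K_ψ = (K_ψ ∩ g_S) ⊕ (K_ψ ∩ ḡ_S); that is, every element of K_ψ is the sum of an element of K_ψ ∩ g_S and an element of K_ψ ∩ ḡ_S, and (K_ψ ∩ g_S) ∩ (K_ψ ∩ ḡ_S) = 0. -/

import Mathlib

open scoped Matrix

noncomputable section

/-- The `n`-qubit Hilbert space `(ℂ²)^{⊗n}`, realized as functions `(Fin n → Fin 2) → ℂ`. -/
abbrev QState (n : ℕ) := (Fin n → Fin 2) → ℂ

/-- The ambient real vector space `ℝ × (Fin n → M₂(ℂ))` containing `u(1) ⊕ su(2)^n`. -/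
abbrev GV (n : ℕ) := ℝ × (Fin n → Matrix (Fin 2) (Fin 2) ℂ)

/-- `su(2)`: traceless skew-Hermitian `2 × 2` complex matrices, as a real subspace. -/
def su2 : Submodule ℝ (Matrix (Fin 2) (Fin 2) ℂ) where
  carrier := {X | Xᴴ = -X ∧ X.trace = 0}
  add_mem' := by
    rintro X Y ⟨hX1, hX2⟩ ⟨hY1, hY2⟩
    exact ⟨by rw [Matrix.conjTranspose_add, hX1, hY1, neg_add],
           by rw [Matrix.trace_add, hX2, hY2, add_zero]⟩
  zero_mem' := ⟨by simp, by simp⟩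
  smul_mem' := by
    rintro r X ⟨hX1, hX2⟩
    exact ⟨by rw [Matrix.conjTranspose_smul, hX1, star_trivial, smul_neg],
           by rw [Matrix.trace_smul, hX2, smul_zero]⟩

/-- The Lie algebra `g = u(1) ⊕ su(2)^n` as a real subspace of `GV n`. -/
def gSub (n : ℕ) : Submodule ℝ (GV n) :=
  (⊤ : Submodule ℝ ℝ).prod (Submodule.pi Set.univ fun _ => su2)

/-- `g_S`: elements `(0, X)` of `g` with `X j = 0` for `j ∉ S`. -/
def gS {n : ℕ} (S : Set (Fin n)) : Submodule ℝ (GV n) :=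
  (⊥ : Submodule ℝ ℝ).prod (Submodule.pi Set.univ fun j =>
    letI := Classical.dec (j ∈ S)
    if j ∈ S then su2 else ⊥)

/-- `ḡ_S`: elements `(t, X)` of `g` with `X j = 0` for `j ∈ S`. -/
def gBar {n : ℕ} (S : Set (Fin n)) : Submodule ℝ (GV n) :=
  (⊤ : Submodule ℝ ℝ).prod (Submodule.pi Set.univ fun j =>
    letI := Classical.dec (j ∈ S)
    if j ∈ S then (⊥ : Submodule ℝ (Matrix (Fin 2) (Fin 2) ℂ)) else su2)

/-- The projection `P_j : g → su(2)`, `(t, X) ↦ X j`. -/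
def Pj {n : ℕ} (j : Fin n) : GV n →ₗ[ℝ] Matrix (Fin 2) (Fin 2) ℂ :=
  (LinearMap.proj j).comp (LinearMap.snd ℝ ℝ (Fin n → Matrix (Fin 2) (Fin 2) ℂ))

/-- Apply the matrix `X` to qubit `j` of the state `ψ`. -/
def applySingle {n : ℕ} (j : Fin n) (X : Matrix (Fin 2) (Fin 2) ℂ) (ψ : QState n) : QState n :=
  fun I => ∑ k : Fin 2, X (I j) k * ψ (Function.update I j k)

/-- The infinitesimal local-unitary action: `dΦ_ψ(t, X) = i t ψ + Σ_j X_j ψ`. -/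
def dPhi {n : ℕ} (ψ : QState n) : GV n →ₗ[ℝ] QState n where
  toFun x := fun I => Complex.I * (x.1 : ℂ) * ψ I + ∑ j, applySingle j (x.2 j) ψ I
  map_add' x y := by
    funext I
    simp only [applySingle, Prod.fst_add, Prod.snd_add, Pi.add_apply, Matrix.add_apply,
      Complex.ofReal_add, add_mul, Finset.sum_add_distrib]
    ring
  map_smul' r x := by
    funext I
    simp only [applySingle, Prod.smul_fst, Prod.smul_snd, Pi.smul_apply, Matrix.smul_apply,
      smul_eq_mul, Complex.real_smul, Complex.ofReal_mul, RingHom.id_apply,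
      Finset.mul_sum, mul_add]
    congr 1
    · ring
    · refine Finset.sum_congr rfl fun j _ => Finset.sum_congr rfl fun k _ => by ring

/-- The stabilizer subalgebra `K_ψ = {(t,X) ∈ g : dΦ_ψ(t,X) = 0}`. -/
def stab {n : ℕ} (ψ : QState n) : Submodule ℝ (GV n) :=
  gSub n ⊓ LinearMap.ker (dPhi ψ)

/-- The componentwise bracket on `g` (zero in the `u(1)` component). -/
def gBracket {n : ℕ} (x y : GV n) : GV n :=
  (0, fun j => ⁅x.2 j, y.2 j⁆)

/-- An `su(2)` block for `ψ`: a set `S` of qubits with `dim (K_ψ ∩ g_S) > 1` and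
`dim (K_ψ ∩ g_{S'}) = 0` for every proper subset `S' ⊊ S`. -/
def Su2Block {n : ℕ} (ψ : QState n) (S : Set (Fin n)) : Prop :=
  1 < Module.finrank ℝ ↥(stab ψ ⊓ gS S) ∧
  ∀ S' : Set (Fin n), S' ⊂ S → Module.finrank ℝ ↥(stab ψ ⊓ gS S') = 0

/-- The union `B` of all `su(2)` blocks for `ψ`. -/
def blockUnion {n : ℕ} (ψ : QState n) : Set (Fin n) :=
  {q | ∃ S : Set (Fin n), Su2Block ψ S ∧ q ∈ S}

/-- The number `p` of `su(2)` blocks for `ψ`. -/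
def blockCount {n : ℕ} (ψ : QState n) : ℕ :=
  {S : Set (Fin n) | Su2Block ψ S}.ncard

/-- `ψ` factors across the set `S` of qubits: `ψ(I) = φ(I|_S) · χ(I|_{Sᶜ})`. -/
def FactorsAcross {n : ℕ} (ψ : QState n) (S : Set (Fin n)) : Prop :=
  ∃ (φ : (↥S → Fin 2) → ℂ) (χ : (↥(Sᶜ) → Fin 2) → ℂ),
    ∀ I : Fin n → Fin 2, ψ I = φ (fun j => I j.1) * χ (fun j => I j.1)

/-- `ψ` is a nonproduct state: it factors across no proper nonempty set of qubits. -/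
def IsNonproduct {n : ℕ} (ψ : QState n) : Prop :=
  ∀ S : Set (Fin n), S ≠ ∅ → S ≠ Set.univ → ¬ FactorsAcross ψ S

/-- `ψ` has a single-qubit factor. -/
def HasSingleQubitFactor {n : ℕ} (ψ : QState n) : Prop :=
  ∃ j : Fin n, FactorsAcross ψ {j}

/-- Apply the local unitary (or just local linear) transformation `⊗_j U_j` to `ψ`. -/
def luApply {n : ℕ} (U : Fin n → Matrix (Fin 2) (Fin 2) ℂ) (ψ : QState n) : QState n :=
  fun I => ∑ J : Fin n → Fin 2, (∏ j, U j (I j) (J j)) * ψ J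

/-- Local unitary equivalence of `n`-qubit states. -/
def LUEquiv {n : ℕ} (ψ ψ' : QState n) : Prop :=
  ∃ U : Fin n → Matrix (Fin 2) (Fin 2) ℂ,
    (∀ j, U j ∈ Matrix.unitaryGroup (Fin 2) ℂ) ∧ ψ' = luApply U ψ

/-- The two-qubit singlet state `φ(a,b) = δ_{a0} δ_{b1} − δ_{a1} δ_{b0}`. -/
def singletFn : Fin 2 → Fin 2 → ℂ := fun a b =>
  if a = 0 ∧ b = 1 then 1 else if a = 1 ∧ b = 0 then -1 else 0

/-- `ψ` has a singlet factor: it is LU-equivalent to a state that factors across a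
two-element set of qubits, with the two-qubit factor being the singlet. -/
def HasSingletFactor {n : ℕ} (ψ : QState n) : Prop :=
  ∃ ψ' : QState n, LUEquiv ψ ψ' ∧ ∃ j k : Fin n, j ≠ k ∧
    ∃ χ : (↥(({j, k} : Set (Fin n))ᶜ) → Fin 2) → ℂ,
      ∀ I : Fin n → Fin 2, ψ' I = singletFn (I j) (I k) * χ (fun q => I q.1)

/-- The matrix `A = diag(i, −i) ∈ su(2)`. -/
def matA : Matrix (Fin 2) (Fin 2) ℂ := !![Complex.I, 0; 0, -Complex.I]

/-- The generalized `n`-qubit GHZ state `α|0…0⟩ + β|1…1⟩`. -/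
def ghz (n : ℕ) (α β : ℂ) : QState n := fun I =>
  if ∀ j, I j = 0 then α else if ∀ j, I j = 1 then β else 0

/-!
Put `m = K_ψ ∩ g_S`. Minimality of the block makes each projection `P_j`, `j ∈ S`, injective
on `m`. Since `dΦ` turns the componentwise bracket into the commutator of operators, `K_ψ` is
closed under the bracket and `[K_ψ, m] ⊆ m`; so `P_j(m)` is a Lie subalgebra of
`su(2) ≅ (ℝ³, ⨯₃)` of dimension `> 1`, hence all of `su(2)`. Given `x ∈ K_ψ`, pick `y ∈ m`
agreeing with `x` at one qubit `j₀ ∈ S` and put `z = x - y`. For `a ∈ m` the bracket `[z, a]`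
lies in `m` and vanishes at `j₀`, hence vanishes; so each `z_j`, `j ∈ S`, commutes with
`P_j(m) = su(2)` and is `0` because `su(2)` has trivial centre. Thus `z ∈ ḡ_S`, and
`g_S ∩ ḡ_S = 0` gives the trivial intersection.
-/

section Su2

open Matrix Complex

lemma Submodule.eq_top_of_cross_mem {V : Submodule ℝ (Fin 3 → ℝ)}
    (hV : ∀ u ∈ V, ∀ v ∈ V, u ⨯₃ v ∈ V) (h : 1 < Module.finrank ℝ V) : V = ⊤ := by
  obtain ⟨u, hu0⟩ := Module.finrank_pos_iff_exists_ne_zero.mp (zero_lt_one.trans h)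
  obtain ⟨v, huv⟩ := exists_linearIndependent_pair_of_one_lt_finrank h hu0
  replace huv : LinearIndependent ℝ ![(u : Fin 3 → ℝ), v] := by
    have := huv.map' V.subtype V.ker_subtype
    rwa [show V.subtype ∘ ![u, v] = ![(u : Fin 3 → ℝ), v] by
      ext i : 1; fin_cases i <;> rfl] at this
  -- `u ⨯₃ v` is nonzero and orthogonal to `u` and `v`, so `u ⨯₃ v, u, v` span `ℝ³`
  have hdet : Matrix.det ![(u : Fin 3 → ℝ) ⨯₃ v, u, v] ≠ 0 := by
    rw [← triple_product_eq_det, Ne, dotProduct_self_eq_zero]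
    exact crossProduct_ne_zero_iff_linearIndependent.mpr huv
  have hspan := (linearIndependent_rows_of_det_ne_zero hdet).span_eq_top_of_card_eq_finrank
    (by simp)
  rw [eq_top_iff, ← hspan, Submodule.span_le, Set.range_subset_iff]
  intro i
  fin_cases i
  exacts [hV _ u.2 _ v.2, u.2, v.2]

lemma eq_zero_of_forall_cross_eq_zero {u : Fin 3 → ℝ} (h : ∀ v, u ⨯₃ v = 0) : u = 0 := by
  have h0 := h (Pi.single 0 1)
  have h1 := h (Pi.single 1 1)
  simp [cross_apply] at h0 h1
  ext i; fin_cases i <;> simp [*]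

/-- `-(i/2)` times the Pauli matrices: `v ↦ ∑ k, v k • su2Basis k` is a Lie algebra isomorphism
from `(ℝ³, ⨯₃)` onto `su(2)`. -/
def su2Basis : Fin 3 → Matrix (Fin 2) (Fin 2) ℂ :=
  ![!![0, -I / 2; -I / 2, 0], !![0, -1 / 2; 1 / 2, 0], !![-I / 2, 0; 0, I / 2]]

def su2OfVec : (Fin 3 → ℝ) →ₗ[ℝ] Matrix (Fin 2) (Fin 2) ℂ :=
  Fintype.linearCombination ℝ su2Basis

lemma su2OfVec_apply (v : Fin 3 → ℝ) :
    su2OfVec v =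
      !![-(v 2 * I) / 2, -(v 0 * I + v 1) / 2; (-(v 0 * I) + v 1) / 2, v 2 * I / 2] := by
  ext i j
  fin_cases i <;> fin_cases j <;>
    simp [su2OfVec, su2Basis, Fintype.linearCombination_apply, Fin.sum_univ_three,
      Complex.real_smul] <;> ring

def su2Coords (X : Matrix (Fin 2) (Fin 2) ℂ) : Fin 3 → ℝ :=
  ![-2 * (X 0 1).im, -2 * (X 0 1).re, -2 * (X 0 0).im]

lemma su2Coords_su2OfVec (v : Fin 3 → ℝ) : su2Coords (su2OfVec v) = v := by
  ext i; fin_cases i <;> simp [su2Coords, su2OfVec_apply] <;> ring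

lemma su2OfVec_injective : Function.Injective su2OfVec :=
  Function.LeftInverse.injective su2Coords_su2OfVec

lemma range_su2OfVec : LinearMap.range su2OfVec = su2 := by
  ext X
  constructor
  · rintro ⟨v, rfl⟩
    constructor
    · ext i j
      fin_cases i <;> fin_cases j <;> simp [su2OfVec_apply, Complex.ext_iff, neg_div]
    · simp [su2OfVec_apply, Matrix.trace_fin_two, neg_div]
  · rintro ⟨hskew, htr⟩
    refine ⟨su2Coords X, ?_⟩
    have h := fun i j => congrFun (congrFun hskew i) j
    simp [Matrix.trace_fin_two, Complex.ext_iff] at h htr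
    ext i j
    fin_cases i <;> fin_cases j <;> simp [su2Coords, su2OfVec_apply, Complex.ext_iff]
    all_goals grind

lemma lie_su2OfVec (u v : Fin 3 → ℝ) : ⁅su2OfVec u, su2OfVec v⁆ = su2OfVec (u ⨯₃ v) := by
  rw [Ring.lie_def]
  ext i j
  fin_cases i <;> fin_cases j <;>
    simp [su2OfVec_apply, cross_apply] <;> ring_nf <;> simp only [I_sq] <;> ring

lemma lie_mem_su2 {X Y : Matrix (Fin 2) (Fin 2) ℂ} (hX : X ∈ su2) (hY : Y ∈ su2) :
    ⁅X, Y⁆ ∈ su2 := by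
  rw [← range_su2OfVec] at hX hY ⊢
  obtain ⟨u, rfl⟩ := hX
  obtain ⟨v, rfl⟩ := hY
  exact ⟨u ⨯₃ v, (lie_su2OfVec u v).symm⟩

lemma eq_zero_of_forall_lie_eq_zero {X : Matrix (Fin 2) (Fin 2) ℂ} (hX : X ∈ su2)
    (h : ∀ Y ∈ su2, ⁅X, Y⁆ = 0) : X = 0 := by
  rw [← range_su2OfVec] at hX
  obtain ⟨u, rfl⟩ := hX
  suffices u = 0 by rw [this, map_zero]
  refine eq_zero_of_forall_cross_eq_zero fun v => su2OfVec_injective ?_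
  rw [← lie_su2OfVec, map_zero]
  exact h _ (range_su2OfVec ▸ LinearMap.mem_range_self su2OfVec v)

lemma eq_su2_of_lie_mem {L : Submodule ℝ (Matrix (Fin 2) (Fin 2) ℂ)} (hL : L ≤ su2)
    (hbr : ∀ X ∈ L, ∀ Y ∈ L, ⁅X, Y⁆ ∈ L) (h : 1 < Module.finrank ℝ L) : L = su2 := by
  have hmap : (L.comap su2OfVec).map su2OfVec = L :=
    Submodule.map_comap_eq_of_le (range_su2OfVec ▸ hL)
  have htop : L.comap su2OfVec = ⊤ := by
    refine Submodule.eq_top_of_cross_mem (fun u hu v hv => ?_) ?_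
    · rw [Submodule.mem_comap, ← lie_su2OfVec]
      exact hbr _ hu _ hv
    · rwa [← hmap, ← (Submodule.equivMapOfInjective _ su2OfVec_injective _).finrank_eq] at h
  rw [← hmap, htop, Submodule.map_top, range_su2OfVec]

end Su2

section LocalAction

variable {n : ℕ}

def qubitOp (j : Fin n) (X : Matrix (Fin 2) (Fin 2) ℂ) : Module.End ℂ (QState n) where
  toFun := applySingle j X
  map_add' ψ φ := by
    funext I
    simp only [applySingle, Pi.add_apply, mul_add, Finset.sum_add_distrib]
  map_smul' c ψ := by
    funext I
    simp only [applySingle, Pi.smul_apply, smul_eq_mul, RingHom.id_apply, Finset.mul_sum]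
    exact Finset.sum_congr rfl fun k _ => by ring

lemma qubitOp_apply (j : Fin n) (X : Matrix (Fin 2) (Fin 2) ℂ) (ψ : QState n) :
    qubitOp j X ψ = applySingle j X ψ := rfl

lemma qubitOp_mul_qubitOp (j : Fin n) (X Y : Matrix (Fin 2) (Fin 2) ℂ) :
    qubitOp j X * qubitOp j Y = qubitOp j (X * Y) := by
  refine LinearMap.ext fun ψ => funext fun I => ?_
  simp only [Module.End.mul_apply, qubitOp_apply, applySingle, Finset.mul_sum,
    Function.update_self, Function.update_idem]
  rw [Finset.sum_comm]
  refine Finset.sum_congr rfl fun m _ => ?_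
  rw [Matrix.mul_apply, Finset.sum_mul]
  exact Finset.sum_congr rfl fun k _ => by ring

lemma qubitOp_commute {j l : Fin n} (hjl : j ≠ l) (X Y : Matrix (Fin 2) (Fin 2) ℂ) :
    Commute (qubitOp j X) (qubitOp l Y) := by
  refine LinearMap.ext fun ψ => funext fun I => ?_
  simp only [Module.End.mul_apply, qubitOp_apply, applySingle, Finset.mul_sum]
  rw [Finset.sum_comm]
  refine Finset.sum_congr rfl fun m _ => Finset.sum_congr rfl fun k _ => ?_
  rw [Function.update_of_ne hjl.symm, Function.update_of_ne hjl, Function.update_comm hjl]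
  ring

lemma qubitOp_sub (j : Fin n) (X Y : Matrix (Fin 2) (Fin 2) ℂ) :
    qubitOp j (X - Y) = qubitOp j X - qubitOp j Y := by
  refine LinearMap.ext fun ψ => funext fun I => ?_
  simp only [LinearMap.sub_apply, qubitOp_apply, applySingle, Pi.sub_apply, Matrix.sub_apply,
    sub_mul, Finset.sum_sub_distrib]

lemma qubitOp_commutator (j : Fin n) (X Y : Matrix (Fin 2) (Fin 2) ℂ) :
    qubitOp j X * qubitOp j Y - qubitOp j Y * qubitOp j X = qubitOp (n := n) j ⁅X, Y⁆ := by
  rw [Ring.lie_def, qubitOp_sub, qubitOp_mul_qubitOp, qubitOp_mul_qubitOp]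

def localOp (x : GV n) : Module.End ℂ (QState n) :=
  (Complex.I * x.1) • 1 + ∑ j, qubitOp j (x.2 j)

lemma dPhi_apply (ψ : QState n) (x : GV n) : dPhi ψ x = localOp x ψ := by
  ext I
  simp [dPhi, localOp, qubitOp_apply, LinearMap.sum_apply]

lemma localOp_gBracket (x y : GV n) :
    localOp (gBracket x y) = localOp x * localOp y - localOp y * localOp x := by
  set A := ∑ j, qubitOp j (x.2 j)
  set B := ∑ j, qubitOp j (y.2 j)
  calc localOp (gBracket x y) = ∑ j, qubitOp j ⁅x.2 j, y.2 j⁆ := by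
        simp [localOp, gBracket]
    _ = A * B - B * A := by
        rw [Finset.sum_mul_sum, Finset.sum_mul_sum,
          Finset.sum_comm (f := fun l j => qubitOp l (y.2 l) * qubitOp j (x.2 j)),
          ← Finset.sum_sub_distrib]
        refine Finset.sum_congr rfl fun j _ => ?_
        rw [← Finset.sum_sub_distrib, Finset.sum_eq_single j
          (fun l _ hlj => sub_eq_zero.mpr (qubitOp_commute (Ne.symm hlj) _ _).eq) (by simp),
          qubitOp_commutator]
    _ = localOp x * localOp y - localOp y * localOp x := by
        simp only [localOp, add_mul, mul_add, smul_mul_assoc, mul_smul_comm, one_mul, mul_one]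
        module

lemma mem_gSub_iff {x : GV n} : x ∈ gSub n ↔ ∀ j, x.2 j ∈ su2 := by
  simp [gSub, Submodule.mem_prod, Submodule.mem_pi]

lemma mem_gS_iff {S : Set (Fin n)} {x : GV n} :
    x ∈ gS S ↔ x.1 = 0 ∧ (∀ j ∈ S, x.2 j ∈ su2) ∧ ∀ j ∉ S, x.2 j = 0 := by
  simp only [gS, Submodule.mem_prod, Submodule.mem_bot, Submodule.mem_pi, Set.mem_univ,
    true_implies]
  refine and_congr_right fun _ => ⟨fun h => ⟨fun j hj => ?_, fun j hj => ?_⟩, fun h j => ?_⟩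
  · simpa [hj] using h j
  · simpa [hj] using h j
  · by_cases hj : j ∈ S <;> simp [hj, h.1, h.2]

lemma mem_gBar_iff {S : Set (Fin n)} {x : GV n} :
    x ∈ gBar S ↔ (∀ j ∈ S, x.2 j = 0) ∧ ∀ j ∉ S, x.2 j ∈ su2 := by
  simp only [gBar, Submodule.mem_prod, Submodule.mem_top, Submodule.mem_pi, Set.mem_univ,
    true_implies, true_and]
  refine ⟨fun h => ⟨fun j hj => ?_, fun j hj => ?_⟩, fun h j => ?_⟩
  · simpa [hj] using h j
  · simpa [hj] using h j
  · by_cases hj : j ∈ S <;> simp [hj, h.1, h.2]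

lemma mem_stab_iff {ψ : QState n} {x : GV n} :
    x ∈ stab ψ ↔ (∀ j, x.2 j ∈ su2) ∧ localOp x ψ = 0 := by
  rw [stab, Submodule.mem_inf, LinearMap.mem_ker, mem_gSub_iff, dPhi_apply]

lemma gBracket_mem_stab {ψ : QState n} {x y : GV n} (hx : x ∈ stab ψ) (hy : y ∈ stab ψ) :
    gBracket x y ∈ stab ψ := by
  rw [mem_stab_iff] at hx hy ⊢
  refine ⟨fun j => lie_mem_su2 (hx.1 j) (hy.1 j), ?_⟩
  rw [localOp_gBracket, LinearMap.sub_apply, Module.End.mul_apply, Module.End.mul_apply, hx.2,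
    hy.2, map_zero, map_zero, sub_self]

lemma gBracket_mem_gS {S : Set (Fin n)} {x y : GV n} (hx : x ∈ gSub n) (hy : y ∈ gS S) :
    gBracket x y ∈ gS S := by
  rw [mem_gSub_iff] at hx
  rw [mem_gS_iff] at hy ⊢
  refine ⟨rfl, fun j hj => lie_mem_su2 (hx j) (hy.2.1 j hj), fun j hj => ?_⟩
  simp [gBracket, hy.2.2 j hj, Ring.lie_def]

lemma gS_inf_gBar (S : Set (Fin n)) : gS S ⊓ gBar S = ⊥ := by
  refine eq_bot_iff.mpr fun x hx => ?_
  rw [Submodule.mem_inf, mem_gS_iff, mem_gBar_iff] at hx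
  refine (Submodule.mem_bot ℝ).mpr (Prod.ext hx.1.1 (funext fun j => ?_))
  by_cases hj : j ∈ S
  exacts [hx.2.1 j hj, hx.1.2.2 j hj]

lemma gS_empty : gS (∅ : Set (Fin n)) = ⊥ := by
  refine eq_bot_iff.mpr fun x hx => ?_
  rw [mem_gS_iff] at hx
  exact (Submodule.mem_bot ℝ).mpr (Prod.ext hx.1 (funext fun j => hx.2.2 j (Set.notMem_empty j)))

end LocalAction

namespace Su2Block

variable {n : ℕ} {ψ : QState n} {S : Set (Fin n)}

lemma nonempty (hS : Su2Block ψ S) : S.Nonempty := by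
  rw [Set.nonempty_iff_ne_empty]
  rintro rfl
  have := hS.1
  rw [gS_empty, inf_bot_eq, finrank_bot] at this
  exact Nat.not_lt_zero 1 this

lemma eq_zero_of_mem_of_apply_eq_zero (hS : Su2Block ψ S) {j : Fin n} (hj : j ∈ S) {a : GV n}
    (ha : a ∈ stab ψ ⊓ gS S) (haj : a.2 j = 0) : a = 0 := by
  have hbot : stab ψ ⊓ gS (S \ {j}) = ⊥ :=
    Submodule.finrank_eq_zero.mp (hS.2 _ (Set.sdiff_singleton_ssubset.mpr hj))
  rw [← Submodule.mem_bot ℝ, ← hbot]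
  rw [Submodule.mem_inf, mem_gS_iff] at ha ⊢
  refine ⟨ha.1, ha.2.1, fun l hl => ha.2.2.1 l hl.1, fun l hl => ?_⟩
  by_cases hlS : l ∈ S
  · rwa [show l = j by by_contra hne; exact hl ⟨hlS, hne⟩]
  · exact ha.2.2.2 l hlS

lemma map_Pj_eq_su2 (hS : Su2Block ψ S) {j : Fin n} (hj : j ∈ S) :
    (stab ψ ⊓ gS S).map (Pj j) = su2 := by
  apply eq_su2_of_lie_mem
  · rintro _ ⟨a, ha, rfl⟩
    exact (mem_stab_iff.mp (Submodule.mem_inf.mp ha).1).1 j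
  · rintro _ ⟨a, ha, rfl⟩ _ ⟨b, hb, rfl⟩
    exact ⟨gBracket a b, Submodule.mem_inf.mpr ⟨gBracket_mem_stab ha.1 hb.1,
      gBracket_mem_gS (Submodule.mem_inf.mp ha.1).1 hb.2⟩, rfl⟩
  · have hinj : Function.Injective ((Pj j).domRestrict (stab ψ ⊓ gS S)) :=
      (injective_iff_map_eq_zero _).mpr fun a ha =>
        Subtype.ext (hS.eq_zero_of_mem_of_apply_eq_zero hj a.2 ha)
    rw [← LinearMap.range_domRestrict, LinearMap.finrank_range_of_inj hinj]
    exact hS.1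

lemma apply_eq_zero_of_mem_stab (hS : Su2Block ψ S) {j₀ : Fin n} (hj₀ : j₀ ∈ S)
    {z : GV n} (hz : z ∈ stab ψ) (hz₀ : z.2 j₀ = 0) {j : Fin n} (hj : j ∈ S) : z.2 j = 0 := by
  refine eq_zero_of_forall_lie_eq_zero ((mem_stab_iff.mp hz).1 j) fun Y hY => ?_
  rw [← hS.map_Pj_eq_su2 hj] at hY
  obtain ⟨a, ha, rfl⟩ := hY
  have hza : gBracket z a ∈ stab ψ ⊓ gS S := Submodule.mem_inf.mpr
    ⟨gBracket_mem_stab hz (Submodule.mem_inf.mp ha).1,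
      gBracket_mem_gS (Submodule.mem_inf.mp hz).1 (Submodule.mem_inf.mp ha).2⟩
  have := hS.eq_zero_of_mem_of_apply_eq_zero hj₀ hza (by simp [gBracket, hz₀, Ring.lie_def])
  exact congrFun (congrArg Prod.snd this) j

lemma exists_eq_add_of_mem_stab (hS : Su2Block ψ S) {x : GV n} (hx : x ∈ stab ψ) :
    ∃ y ∈ stab ψ ⊓ gS S, ∃ z ∈ stab ψ ⊓ gBar S, x = y + z := by
  obtain ⟨j₀, hj₀⟩ := hS.nonempty
  obtain ⟨y, hy, hyx⟩ : x.2 j₀ ∈ (stab ψ ⊓ gS S).map (Pj j₀) :=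
    (hS.map_Pj_eq_su2 hj₀).symm ▸ (mem_stab_iff.mp hx).1 j₀
  have hxy : x - y ∈ stab ψ := sub_mem hx (Submodule.mem_inf.mp hy).1
  refine ⟨y, hy, x - y, Submodule.mem_inf.mpr ⟨hxy, ?_⟩, (add_sub_cancel y x).symm⟩
  rw [mem_gBar_iff]
  refine ⟨fun j hj => hS.apply_eq_zero_of_mem_stab hj₀ hxy ?_ hj,
    fun j _ => (mem_stab_iff.mp hxy).1 j⟩
  exact sub_eq_zero.mpr hyx.symm

end Su2Block

theorem stmt2_general {n : ℕ} (ψ : QState n)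
    (S : Set (Fin n)) (hS : Su2Block ψ S) :
    (∀ x ∈ stab ψ, ∃ y ∈ stab ψ ⊓ gS S, ∃ z ∈ stab ψ ⊓ gBar S, x = y + z) ∧
    (stab ψ ⊓ gS S) ⊓ (stab ψ ⊓ gBar S) = ⊥ :=
  ⟨fun _ hx => hS.exists_eq_add_of_mem_stab hx,
    eq_bot_iff.mpr ((inf_le_inf inf_le_right inf_le_right).trans (gS_inf_gBar S).le)⟩

/-- If `S` is an `su(2)` block for `ψ`, then `K_ψ` is the internal direct
sum of `K_ψ ∩ g_S` and `K_ψ ∩ ḡ_S`. -/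
theorem stmt2 {n : ℕ} (hn : 1 ≤ n) (ψ : QState n) (hψ : ψ ≠ 0)
    (S : Set (Fin n)) (hS : Su2Block ψ S) :
    (∀ x ∈ stab ψ, ∃ y ∈ stab ψ ⊓ gS S, ∃ z ∈ stab ψ ⊓ gBar S, x = y + z) ∧
    (stab ψ ⊓ gS S) ⊓ (stab ψ ⊓ gBar S) = ⊥ :=
  stmt2_general ψ S hS
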